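/- Suppose gcd(m/i, n/j) = t = 1. Then for every rational rank 1 non-discrete valuation ν dominating R_𝔪 that has a generating sequence Q_0 = X, Q_1 = Y, Q_2, … in which every Q_l is an eigenfunction for H_{i,j,t,x}, the semigroup S^{R_𝔪}(ν) is a finitely generated S^{(A_{i,j,t,x})_𝔫}(ν)-module. -/

import Mathlib

open MvPolynomial Finset Pointwise

noncomputable section

namespace DuttaPaper

/-- The polynomial ring `K[X,Y]`, with `X = X 0` and `Y = X 1`. -/
abbrev Poly (K : Type) [Field K] : Type := MvPolynomial (Fin 2) K

/-- The rational function field `K(X,Y)`. -/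
abbrev RF (K : Type) [Field K] : Type := FractionRing (Poly K)

variable {K : Type} [Field K]

/-- The `K`-algebra endomorphism of `K[X,Y]` sending `X ↦ u • X`, `Y ↦ v • Y`;
this is the action of `(u,v) ∈ 𝕌_m × 𝕌_n` on `K[X,Y]`. -/
def act (u v : K) : Poly K →ₐ[K] Poly K :=
  MvPolynomial.aeval ![MvPolynomial.C u * MvPolynomial.X 0,
    MvPolynomial.C v * MvPolynomial.X 1]

/-- Membership in the set `H_{i,j,t,x} = {(α^{a i}, β^{b j}) : b ≡ a x (mod t)} ⊆ K × K`. -/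
def Hmem (α β : K) (i j t x : ℕ) (p : K × K) : Prop :=
  ∃ a b : ℤ, b ≡ a * (x : ℤ) [ZMOD (t : ℤ)] ∧
    p = (α ^ (a * (i : ℤ)), β ^ (b * (j : ℤ)))

/-- `f ∈ K[X,Y]` is an eigenfunction for `H_{i,j,t,x}`. -/
def IsEigen (α β : K) (i j t x : ℕ) (f : Poly K) : Prop :=
  ∀ p : K × K, Hmem α β i j t x p → ∃ lam : K, act p.1 p.2 f = lam • f

/-- `f ∈ K[X,Y]` belongs to the invariant ring `A_{i,j,t,x} = K[X,Y]^{H_{i,j,t,x}}`. -/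
def Invariant (α β : K) (i j t x : ℕ) (f : Poly K) : Prop :=
  ∀ p : K × K, Hmem α β i j t x p → act p.1 p.2 f = f

/-- A `ℚ`-valued (rational rank 1) valuation on a field `L`: the data of the values of the
nonzero elements (the value of `0` is irrelevant). -/
structure RatVal (L : Type) [Field L] where
  v : L → ℚ
  v_mul : ∀ a b : L, a ≠ 0 → b ≠ 0 → v (a * b) = v a + v b
  v_add : ∀ a b : L, a ≠ 0 → b ≠ 0 → a + b ≠ 0 → min (v a) (v b) ≤ v (a + b)

/-- Value of a polynomial under a valuation of `K(X,Y)`. -/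
def vP (ν : RatVal (RF K)) (f : Poly K) : ℚ :=
  ν.v (algebraMap (Poly K) (RF K) f)

/-- `ν` dominates `R_𝔪 = K[X,Y]_{(X,Y)}` : `ν ≥ 0` on `R_𝔪` and `ν > 0` on its maximal
ideal (expressed on the level of polynomials). -/
def DominatesRm (ν : RatVal (RF K)) : Prop :=
  (∀ f : Poly K, f ≠ 0 → 0 ≤ vP ν f) ∧
  (∀ f : Poly K, f ≠ 0 → MvPolynomial.constantCoeff f = 0 → 0 < vP ν f)

/-- `ν` is non-discrete: its value group is not a cyclic subgroup of `ℚ`. -/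
def Nondiscrete (ν : RatVal (RF K)) : Prop :=
  ¬ ∃ g : ℚ, ∀ z : RF K, z ≠ 0 → ∃ k : ℤ, ν.v z = (k : ℚ) * g

/-- Data of a candidate generating sequence: the polynomials `Q_l` and the numbers `m̄_l`. -/
structure GSData (K : Type) [Field K] where
  Q : ℕ → Poly K
  mbar : ℕ → ℕ

/-- `γ_l = ν(Q_l)`. -/
def GSData.γ (G : GSData K) (ν : RatVal (RF K)) (l : ℕ) : ℚ := vP ν (G.Q l)

/-- `d(l) = m̄_1 ⋯ m̄_{l-1}` (so `d(1) = 1`). -/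
def GSData.d (G : GSData K) (l : ℕ) : ℕ := ∏ k ∈ Finset.Icc 1 (l - 1), G.mbar k

/-- An exponent vector `e` is admissible when `e k < m̄_k` for all `k ≥ 1`. -/
def Adm (G : GSData K) (e : ℕ →₀ ℕ) : Prop := ∀ k, 1 ≤ k → e k < G.mbar k

/-- The monomial `X^{e 0} Q_1^{e 1} Q_2^{e 2} ⋯` in the generating sequence. -/
def Pmon (G : GSData K) (e : ℕ →₀ ℕ) : Poly K := e.prod fun k a => G.Q k ^ a

/-- The value `Σ_k e k • γ_k` of such a monomial. -/
def evalγ (ν : RatVal (RF K)) (G : GSData K) (e : ℕ →₀ ℕ) : ℚ :=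
  e.sum fun k a => (a : ℚ) * G.γ ν k

/-- `(Q_l)_{l≥0}` is a generating sequence for `ν` in `K[X,Y]` (properties (1)–(4) of
Section 2 of the paper, for the algorithm of Cutkosky–Vinh). -/
structure IsGenSeq (ν : RatVal (RF K)) (G : GSData K) : Prop where
  hQ0 : G.Q 0 = MvPolynomial.X 0
  hQ1 : G.Q 1 = MvPolynomial.X 1
  /-- `m̄_l ≥ 1`. -/
  hmbar_pos : ∀ l, 1 ≤ l → 0 < G.mbar l
  /-- `m̄_l γ_l ∈ G(γ_0, …, γ_{l-1})`. -/
  hmbar_mem : ∀ l, 1 ≤ l → ∃ c : ℕ → ℤ,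
      (G.mbar l : ℚ) * G.γ ν l = ∑ k ∈ Finset.range l, (c k : ℚ) * G.γ ν k
  /-- `m̄_l` is minimal with this property. -/
  hmbar_min : ∀ l, 1 ≤ l → ∀ q : ℕ, 0 < q →
      (∃ c : ℕ → ℤ, (q : ℚ) * G.γ ν l = ∑ k ∈ Finset.range l, (c k : ℚ) * G.γ ν k) →
      G.mbar l ≤ q
  /-- (1) `γ_{l+1} > m̄_l γ_l`. -/
  hgrowth : ∀ l, 1 ≤ l → (G.mbar l : ℚ) * G.γ ν l < G.γ ν (l + 1)
  /-- (2) `Q_l = Y^{d(l)} + (terms of lower Y-degree)`. -/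
  hmonic : ∀ l, 1 ≤ l →
      G.Q l - MvPolynomial.X 1 ^ G.d l = 0 ∨
      MvPolynomial.degreeOf 1 (G.Q l - MvPolynomial.X 1 ^ G.d l) < G.d l
  /-- (3), existence and uniqueness of the expansion of any nonzero `f` in terms of the
  admissible monomials `X^{e 0} Q_1^{e 1} ⋯ Q_r^{e r}`, `e k < m̄_k` for `k ≥ 1`. -/
  hexpand : ∀ f : Poly K, f ≠ 0 →
      ∃! c : (ℕ →₀ ℕ) →₀ K,
        (∀ e ∈ c.support, Adm G e) ∧
        f = c.sum fun e a => MvPolynomial.C a * Pmon G e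
  /-- (3), the nonzero terms of the expansion have pairwise distinct values and
  `ν(f)` is the minimum of those values. -/
  hval : ∀ f : Poly K, f ≠ 0 → ∀ c : (ℕ →₀ ℕ) →₀ K,
      (∀ e ∈ c.support, Adm G e) →
      f = (c.sum fun e a => MvPolynomial.C a * Pmon G e) →
      (∀ e ∈ c.support, ∀ e' ∈ c.support, evalγ ν G e = evalγ ν G e' → e = e') ∧
      ∃ e₀ ∈ c.support, vP ν f = evalγ ν G e₀ ∧
        ∀ e ∈ c.support, evalγ ν G e₀ ≤ evalγ ν G e
  /-- (4) `Q_{l+1} = Q_l^{m̄_l} - λ_l X^{c_0} Y^{c_1} Q_2^{c_2} ⋯ Q_{l-1}^{c_{l-1}}` with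
  `0 ≤ c_k < m̄_k` for `k ≥ 1` and `m̄_l γ_l = Σ_{k<l} c_k γ_k`. -/
  hrec : ∀ l, 1 ≤ l → ∃ lam : K, lam ≠ 0 ∧ ∃ cc : ℕ → ℕ,
      (∀ k, 1 ≤ k → k < l → cc k < G.mbar k) ∧
      G.Q (l + 1) =
        G.Q l ^ G.mbar l - MvPolynomial.C lam * ∏ k ∈ Finset.range l, G.Q k ^ cc k ∧
      (G.mbar l : ℚ) * G.γ ν l = ∑ k ∈ Finset.range l, (cc k : ℚ) * G.γ ν k

/-- The valuation semigroup `S^{R_𝔪}(ν) = {ν(h) : 0 ≠ h ∈ R_𝔪}`. -/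
def SRm (ν : RatVal (RF K)) : Set ℚ :=
  {q | ∃ f g : Poly K, f ≠ 0 ∧ MvPolynomial.constantCoeff g ≠ 0 ∧
    q = vP ν f - vP ν g}

/-- The valuation semigroup `S^{(A_{i,j,t,x})_𝔫}(ν)` of the invariant ring localized at
`𝔫 = (X,Y) ∩ A_{i,j,t,x}`. -/
def SA (ν : RatVal (RF K)) (α β : K) (i j t x : ℕ) : Set ℚ :=
  {q | ∃ f g : Poly K, f ≠ 0 ∧ Invariant α β i j t x f ∧ Invariant α β i j t x g ∧
    MvPolynomial.constantCoeff g ≠ 0 ∧ q = vP ν f - vP ν g}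

/-- `S` is a finitely generated module over the subsemigroup `T`:
`S = {s_1, …, s_k} + T` for finitely many `s_i ∈ S`. -/
def FGover (S T : Set ℚ) : Prop :=
  ∃ F : Finset ℚ, (F : Set ℚ) ⊆ S ∧ S = (F : Set ℚ) + T



/-! ### Auxiliary lemmas -/

section Aux

variable {K : Type} [Field K]

lemma act_monomial (u v : K) (s : Fin 2 →₀ ℕ) (c : K) :
    act u v (MvPolynomial.monomial s c)
      = MvPolynomial.C (u ^ s 0 * v ^ s 1) * MvPolynomial.monomial s c := by
  rw [act, aeval_monomial, monomial_eq,
    Finsupp.prod_fintype _ _ (fun i => pow_zero _),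
    Finsupp.prod_fintype _ _ (fun i => pow_zero _), Fin.prod_univ_two, Fin.prod_univ_two]
  simp only [Matrix.cons_val_zero, Matrix.cons_val_one, Matrix.head_cons, mul_pow, map_mul,
    map_pow, algebraMap_eq]
  ring

lemma coeff_act (u v : K) (f : Poly K) (s : Fin 2 →₀ ℕ) :
    MvPolynomial.coeff s (act u v f) = u ^ s 0 * v ^ s 1 * MvPolynomial.coeff s f := by
  induction f using MvPolynomial.induction_on' with
  | monomial s' c =>
      rw [act_monomial]
      simp only [coeff_C_mul, coeff_monomial]
      split_ifs with h
      · subst h; ring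
      · ring
  | add p q hp hq =>
      simp only [map_add, coeff_add, hp, hq]; ring

lemma eigen_val {u v lam : K} {f : Poly K} (h : act u v f = lam • f)
    {s : Fin 2 →₀ ℕ} (hs : MvPolynomial.coeff s f ≠ 0) : lam = u ^ s 0 * v ^ s 1 := by
  have h2 := congrArg (MvPolynomial.coeff s) h
  rw [coeff_act, MvPolynomial.coeff_smul, smul_eq_mul] at h2
  exact (mul_right_cancel₀ hs h2).symm

lemma zpow_pow_eq_one {β : K} {n : ℕ} (h1 : β ^ (n : ℤ) = 1) (z : ℤ) (w : ℕ)
    (hd : (n : ℤ) ∣ z * (w : ℤ)) : (β ^ z) ^ w = 1 := by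
  obtain ⟨c, hc⟩ := hd
  have : (β ^ z) ^ w = β ^ (z * (w : ℤ)) := by
    rw [← zpow_natCast (β ^ z) w, ← zpow_mul]
  rw [this, hc, zpow_mul, h1, one_zpow]

/-- coefficient of `Q_l` at the top `Y`-monomial is 1. -/
lemma coeff_Q_top {ν : RatVal (RF K)} {G : GSData K} (hG : IsGenSeq ν G) {l : ℕ} (hl : 1 ≤ l) :
    MvPolynomial.coeff (Finsupp.single 1 (G.d l)) (G.Q l) = 1 := by
  rcases hG.hmonic l hl with h | h
  · rw [sub_eq_zero] at h
    rw [h, MvPolynomial.X_pow_eq_monomial, coeff_monomial, if_pos rfl]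
  · have hd : 0 < G.d l := lt_of_le_of_lt (Nat.zero_le _) h
    have h0 : MvPolynomial.coeff (Finsupp.single 1 (G.d l)) (G.Q l - X 1 ^ G.d l) = 0 := by
      by_contra hc
      have := (MvPolynomial.degreeOf_lt_iff hd).mp h (Finsupp.single 1 (G.d l))
        (MvPolynomial.mem_support_iff.mpr hc)
      simp at this
    have : G.Q l = (G.Q l - X 1 ^ G.d l) + X 1 ^ G.d l := by ring
    rw [this, coeff_add, h0, MvPolynomial.X_pow_eq_monomial, coeff_monomial, if_pos rfl,
      zero_add]

lemma Q_ne_zero {ν : RatVal (RF K)} {G : GSData K} (hG : IsGenSeq ν G) (l : ℕ) :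
    G.Q l ≠ 0 := by
  rcases Nat.eq_zero_or_pos l with rfl | hl
  · rw [hG.hQ0]; exact MvPolynomial.X_ne_zero _
  · intro h
    have := coeff_Q_top hG hl
    rw [h] at this
    simp at this

end Aux

section Val

variable {K : Type} [Field K]

lemma algMap_ne {f : Poly K} (hf : f ≠ 0) : algebraMap (Poly K) (RF K) f ≠ 0 := by
  rw [Ne, IsFractionRing.to_map_eq_zero_iff]; exact hf

lemma vP_mul (ν : RatVal (RF K)) {f g : Poly K} (hf : f ≠ 0) (hg : g ≠ 0) :
    vP ν (f * g) = vP ν f + vP ν g := by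
  unfold vP
  rw [map_mul]
  exact ν.v_mul _ _ (algMap_ne hf) (algMap_ne hg)

lemma vP_one (ν : RatVal (RF K)) : vP ν (1 : Poly K) = 0 := by
  have := vP_mul ν (one_ne_zero : (1 : Poly K) ≠ 0) one_ne_zero
  rw [mul_one] at this
  linarith

lemma vP_pow (ν : RatVal (RF K)) {f : Poly K} (hf : f ≠ 0) (k : ℕ) :
    vP ν (f ^ k) = k * vP ν f := by
  induction k with
  | zero => simp [vP_one ν]
  | succ k ih =>
      rw [pow_succ, vP_mul ν (pow_ne_zero _ hf) hf, ih]
      push_cast; ring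

lemma vP_prod (ν : RatVal (RF K)) {s : Finset ℕ} {f : ℕ → Poly K}
    (hf : ∀ k ∈ s, f k ≠ 0) : vP ν (∏ k ∈ s, f k) = ∑ k ∈ s, vP ν (f k) := by
  classical
  induction s using Finset.induction with
  | empty => simp [vP_one ν]
  | @insert a s ha ih =>
      rw [Finset.prod_insert ha, Finset.sum_insert ha,
        vP_mul ν (hf a (Finset.mem_insert_self a s))
          (Finset.prod_ne_zero_iff.mpr fun k hk => hf k (Finset.mem_insert_of_mem hk)),
        ih fun k hk => hf k (Finset.mem_insert_of_mem hk)]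

lemma vP_C (ν : RatVal (RF K)) (hdom : DominatesRm ν) {c : K} (hc : c ≠ 0) :
    vP ν (MvPolynomial.C c : Poly K) = 0 := by
  have h1 : (MvPolynomial.C c : Poly K) ≠ 0 := by
    simpa using hc
  have h2 : (MvPolynomial.C c⁻¹ : Poly K) ≠ 0 := by
    simpa using inv_ne_zero hc
  have hmul : vP ν (MvPolynomial.C c * MvPolynomial.C c⁻¹ : Poly K) = vP ν (MvPolynomial.C c : Poly K) + vP ν (MvPolynomial.C c⁻¹ : Poly K) := vP_mul ν h1 h2
  rw [← map_mul, mul_inv_cancel₀ hc, map_one, vP_one ν] at hmul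
  have g1 := hdom.1 _ h1
  have g2 := hdom.1 _ h2
  linarith

lemma vP_cc (ν : RatVal (RF K)) (hdom : DominatesRm ν) {g : Poly K}
    (hg : MvPolynomial.constantCoeff g ≠ 0) : vP ν g = 0 := by
  set c := MvPolynomial.constantCoeff g with hc
  have hg0 : g ≠ 0 := fun h => hg (by simp [hc, h])
  rcases eq_or_ne (g - MvPolynomial.C c) 0 with h | h
  · rw [sub_eq_zero] at h
    rw [h]; exact vP_C ν hdom hg
  · have hC : vP ν (MvPolynomial.C c : Poly K) = 0 := vP_C ν hdom hg
    have hpos : 0 < vP ν (g - MvPolynomial.C c) := by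
      apply hdom.2 _ h
      simp [hc]
    have hge : 0 ≤ vP ν g := hdom.1 _ hg0
    have hCne : (MvPolynomial.C c : Poly K) ≠ 0 := by simpa using hg
    have hneg : vP ν (-(g - MvPolynomial.C c)) = vP ν (g - MvPolynomial.C c) := by
      have := vP_mul ν (f := (MvPolynomial.C (-1 : K) : Poly K)) (g := g - MvPolynomial.C c)
        (by simp) h
      have hm1 : vP ν (MvPolynomial.C (-1 : K) : Poly K) = 0 :=
        vP_C ν hdom (by norm_num)
      rw [hm1, zero_add] at this
      rw [← this]
      congr 1
      rw [map_neg, map_one]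
      ring
    have hadd := ν.v_add (algebraMap (Poly K) (RF K) g)
      (algebraMap (Poly K) (RF K) (-(g - MvPolynomial.C c)))
      (algMap_ne hg0) (algMap_ne (neg_ne_zero.mpr h)) ?_
    · have heq : algebraMap (Poly K) (RF K) g
          + algebraMap (Poly K) (RF K) (-(g - MvPolynomial.C c))
          = algebraMap (Poly K) (RF K) (MvPolynomial.C c) := by
        rw [← RingHom.map_add]
        congr 1
        ring
      rw [heq] at hadd
      have : min (vP ν g) (vP ν (-(g - MvPolynomial.C c))) ≤ 0 := by
        rw [← hC]; exact hadd
      rw [hneg] at this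
      rcases min_le_iff.mp this with h' | h'
      · linarith
      · linarith
    · rw [← RingHom.map_add]
      apply algMap_ne
      intro hz
      apply hCne
      rw [← hz]; ring
  
end Val

section Inv

variable {K : Type} [Field K] (α β : K) (i j t x : ℕ)

lemma inv_one' : Invariant α β i j t x (1 : Poly K) := fun _ _ => map_one _

lemma inv_mul {f g : Poly K} (hf : Invariant α β i j t x f)
    (hg : Invariant α β i j t x g) : Invariant α β i j t x (f * g) := fun p hp => by
  rw [map_mul, hf p hp, hg p hp]

lemma inv_pow {f : Poly K} (hf : Invariant α β i j t x f) (k : ℕ) :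
    Invariant α β i j t x (f ^ k) := fun p hp => by rw [map_pow, hf p hp]

lemma inv_prod {s : Finset ℕ} {f : ℕ → Poly K}
    (hf : ∀ k ∈ s, Invariant α β i j t x (f k)) :
    Invariant α β i j t x (∏ k ∈ s, f k) := fun p hp => by
  rw [map_prod]
  exact Finset.prod_congr rfl fun k hk => hf k hk p hp

end Inv

/-- if `gcd(m/i, n/j) = t = 1`, the semigroup is finitely generated over
the invariant subsemigroup, for every such valuation with an eigenfunction generating
sequence. -/
theorem stmt_14 (K : Type) [Field K] [IsAlgClosed K] [CharZero K]
    (m n : ℕ) (hm : 0 < m) (hn : 0 < n) (α β : K)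
    (hα : IsPrimitiveRoot α m) (hβ : IsPrimitiveRoot β n)
    (i j t x : ℕ) (hi : 0 < i) (hj : 0 < j) (ht : 0 < t)
    (him : i ∣ m) (hjn : j ∣ n) (hti : t ∣ m / i) (htj : t ∣ n / j)
    (hxt : Nat.gcd x t = 1) (hx1 : 1 ≤ x) (hxle : x ≤ t)
    (ν : RatVal (RF K)) (hdom : DominatesRm ν) (hnd : Nondiscrete ν)
    (G : GSData K) (hG : IsGenSeq ν G)
    (heig : ∀ l, IsEigen α β i j t x (G.Q l))
    (hgcd : Nat.gcd (m / i) (n / j) = t) (ht1 : t = 1) :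
    FGover (SRm ν) (SA ν α β i j t x) := by
  subst ht1
  set M := m / i with hMdef
  set N := n / j with hNdef
  have hM : 0 < M := Nat.div_pos (Nat.le_of_dvd hm him) hi
  have hN : 0 < N := Nat.div_pos (Nat.le_of_dvd hn hjn) hj
  have hiM : i * M = m := Nat.mul_div_cancel' him
  have hjN : j * N = n := Nat.mul_div_cancel' hjn
  have hα1 : α ^ (m : ℤ) = 1 := by rw [zpow_natCast]; exact hα.pow_eq_one
  have hβ1 : β ^ (n : ℤ) = 1 := by rw [zpow_natCast]; exact hβ.pow_eq_one
  have hmem : ∀ a b : ℤ, Hmem α β i j 1 x (α ^ (a * (i:ℤ)), β ^ (b * (j:ℤ))) :=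
    fun a b => ⟨a, b, by simp [Int.ModEq, Int.emod_one], rfl⟩
  -- invariance of X^M and Y^N
  have invXM : Invariant α β i j 1 x (G.Q 0 ^ M) := by
    rw [hG.hQ0]
    rintro p ⟨a, b, -, rfl⟩
    rw [map_pow]
    have hx : act (α ^ (a * (i:ℤ))) (β ^ (b * (j:ℤ))) (X 0 : Poly K)
        = C (α ^ (a * (i:ℤ))) * X 0 := by simp [act]
    show act (α ^ (a * (i:ℤ))) (β ^ (b * (j:ℤ))) (X 0 : Poly K) ^ M = _
    rw [hx, mul_pow, ← map_pow,
      zpow_pow_eq_one hα1 _ _ ⟨a, by rw [← hiM]; push_cast; ring⟩, map_one, one_mul]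
  have invYN : Invariant α β i j 1 x (G.Q 1 ^ N) := by
    rw [hG.hQ1]
    rintro p ⟨a, b, -, rfl⟩
    rw [map_pow]
    have hx : act (α ^ (a * (i:ℤ))) (β ^ (b * (j:ℤ))) (X 1 : Poly K)
        = C (β ^ (b * (j:ℤ))) * X 1 := by simp [act]
    show act (α ^ (a * (i:ℤ))) (β ^ (b * (j:ℤ))) (X 1 : Poly K) ^ N = _
    rw [hx, mul_pow, ← map_pow,
      zpow_pow_eq_one hβ1 _ _ ⟨b, by rw [← hjN]; push_cast; ring⟩, map_one, one_mul]
  -- N divides mbar 1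
  obtain ⟨lam, hlam0, cc, hcclt, hQ2eq, -⟩ := hG.hrec 1 le_rfl
  rw [Finset.prod_range_one, hG.hQ0, hG.hQ1] at hQ2eq
  have hm1pos := hG.hmbar_pos 1 le_rfl
  have hsne : (Finsupp.single (0 : Fin 2) (cc 0)) ≠ (Finsupp.single (1 : Fin 2) (G.mbar 1)) := by
    intro h
    have h1 := DFunLike.congr_fun h (1 : Fin 2)
    rw [Finsupp.single_eq_of_ne (by decide), Finsupp.single_eq_same] at h1
    omega
  have hs1 : MvPolynomial.coeff (Finsupp.single 1 (G.mbar 1)) (G.Q 2) = 1 := by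
    rw [hQ2eq, coeff_sub, MvPolynomial.X_pow_eq_monomial, coeff_monomial, if_pos rfl,
      coeff_C_mul, MvPolynomial.X_pow_eq_monomial, coeff_monomial, if_neg hsne, mul_zero,
      sub_zero]
  have hs2 : MvPolynomial.coeff (Finsupp.single 0 (cc 0)) (G.Q 2) = -lam := by
    rw [hQ2eq, coeff_sub, MvPolynomial.X_pow_eq_monomial, coeff_monomial,
      if_neg (Ne.symm hsne), coeff_C_mul, MvPolynomial.X_pow_eq_monomial, coeff_monomial,
      if_pos rfl, mul_one, zero_sub]
  obtain ⟨lam2, hlam2⟩ := heig 2 _ (hmem 0 1)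
  have e1 := eigen_val hlam2 (s := Finsupp.single 1 (G.mbar 1))
    (by rw [hs1]; exact one_ne_zero)
  have e2 := eigen_val hlam2 (s := Finsupp.single 0 (cc 0))
    (by rw [hs2]; exact neg_ne_zero.mpr hlam0)
  rw [Finsupp.single_eq_of_ne (by decide), Finsupp.single_eq_same] at e1
  rw [Finsupp.single_eq_same, Finsupp.single_eq_of_ne (by decide)] at e2
  simp only [zero_mul, zpow_zero, one_mul, one_pow, pow_zero, mul_one] at e1 e2
  -- e1 : lam2 = (β ^ ((1:ℤ) * j)) ^ G.mbar 1 ; e2 : lam2 = 1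
  have hpow1 : β ^ ((j : ℤ) * (G.mbar 1 : ℤ)) = 1 := by
    have h' : (β ^ ((j:ℤ))) ^ G.mbar 1 = 1 := by rw [← e1, e2]
    rw [← zpow_natCast (β ^ (j:ℤ)) (G.mbar 1), ← zpow_mul] at h'
    exact h'
  have hndvd : n ∣ j * G.mbar 1 := by
    have := (hβ.zpow_eq_one_iff_dvd _).mp hpow1
    exact_mod_cast this
  have hNm1 : N ∣ G.mbar 1 := by
    refine (Nat.mul_dvd_mul_iff_left hj).mp ?_
    rw [hjN]; exact hndvd
  have hNd : ∀ l, 2 ≤ l → N ∣ G.d l := by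
    intro l hl
    exact dvd_trans hNm1
      (Finset.dvd_prod_of_mem _ (by simp only [Finset.mem_Icc]; omega))
  -- invariance of Q_l, l ≥ 2
  have invQ : ∀ l, 2 ≤ l → Invariant α β i j 1 x (G.Q l) := by
    rintro l hl p ⟨a, b, -, rfl⟩
    obtain ⟨lam', hlam'⟩ := heig l _ (hmem a b)
    have hv := eigen_val hlam' (s := Finsupp.single 1 (G.d l))
      (by rw [coeff_Q_top hG (by omega : 1 ≤ l)]; exact one_ne_zero)
    rw [Finsupp.single_eq_of_ne (by decide), Finsupp.single_eq_same, pow_zero, one_mul] at hv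
    obtain ⟨c, hc⟩ := hNd l hl
    have hone : (β ^ (b * (j:ℤ))) ^ G.d l = 1 :=
      zpow_pow_eq_one hβ1 _ _ ⟨b * c, by rw [hc, ← hjN]; push_cast; ring⟩
    rw [hlam', hv, hone, one_smul]
  -- the decomposition lemma
  have inv1 : Invariant α β i j 1 x (1 : Poly K) := inv_one' α β i j 1 x
  have key : ∀ e : ℕ →₀ ℕ, ∃ h : Poly K, h ≠ 0 ∧ Invariant α β i j 1 x h ∧
      evalγ ν G e = ((e 0 % M : ℕ) : ℚ) * vP ν (G.Q 0) + ((e 1 % N : ℕ) : ℚ) * vP ν (G.Q 1)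
        + vP ν h := by
    intro e
    set B := max 2 (e.support.sup id + 1) with hB
    have hsub : e.support ⊆ Finset.range B := by
      intro k hk
      have : k ≤ e.support.sup id := Finset.le_sup (f := id) hk
      have : k < e.support.sup id + 1 := by omega
      exact Finset.mem_range.mpr (lt_of_lt_of_le this (le_max_right _ _))
    have hsum : evalγ ν G e = ∑ k ∈ Finset.range B, ((e k : ℚ) * G.γ ν k) := by
      simp only [evalγ]
      exact Finsupp.sum_of_support_subset e hsub _ (fun k _ => by simp)
    have hB2 : 2 ≤ B := le_max_left _ _
    have hins : Finset.range B = insert 0 (insert 1 (Finset.Ico 2 B)) := by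
      ext k
      simp only [Finset.mem_range, Finset.mem_insert, Finset.mem_Ico]
      omega
    have h1ni : (1 : ℕ) ∉ Finset.Ico 2 B := by simp
    have h0ni : (0 : ℕ) ∉ insert 1 (Finset.Ico 2 B) := by simp
    refine ⟨(G.Q 0 ^ M) ^ (e 0 / M) * ((G.Q 1 ^ N) ^ (e 1 / N)
      * ∏ k ∈ Finset.Ico 2 B, G.Q k ^ e k), ?_, ?_, ?_⟩
    · exact mul_ne_zero (pow_ne_zero _ (pow_ne_zero _ (Q_ne_zero hG 0)))
        (mul_ne_zero (pow_ne_zero _ (pow_ne_zero _ (Q_ne_zero hG 1)))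
          (Finset.prod_ne_zero_iff.mpr fun k _ => pow_ne_zero _ (Q_ne_zero hG k)))
    · refine inv_mul _ _ _ _ _ _ (inv_pow _ _ _ _ _ _ invXM _)
        (inv_mul _ _ _ _ _ _ (inv_pow _ _ _ _ _ _ invYN _) (inv_prod _ _ _ _ _ _ ?_))
      intro k hk
      exact inv_pow _ _ _ _ _ _ (invQ k (Finset.mem_Ico.mp hk).1) _
    · have hprodne : (∏ k ∈ Finset.Ico 2 B, G.Q k ^ e k) ≠ 0 :=
        Finset.prod_ne_zero_iff.mpr fun k _ => pow_ne_zero _ (Q_ne_zero hG k)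
      rw [vP_mul ν (pow_ne_zero _ (pow_ne_zero _ (Q_ne_zero hG 0)))
          (mul_ne_zero (pow_ne_zero _ (pow_ne_zero _ (Q_ne_zero hG 1))) hprodne),
        vP_mul ν (pow_ne_zero _ (pow_ne_zero _ (Q_ne_zero hG 1))) hprodne,
        vP_pow ν (pow_ne_zero _ (Q_ne_zero hG 0)), vP_pow ν (Q_ne_zero hG 0),
        vP_pow ν (pow_ne_zero _ (Q_ne_zero hG 1)), vP_pow ν (Q_ne_zero hG 1),
        vP_prod ν (fun k _ => pow_ne_zero _ (Q_ne_zero hG k))]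
      have hpr : ∑ k ∈ Finset.Ico 2 B, vP ν (G.Q k ^ e k)
          = ∑ k ∈ Finset.Ico 2 B, ((e k : ℚ) * G.γ ν k) :=
        Finset.sum_congr rfl fun k _ => vP_pow ν (Q_ne_zero hG k) _
      rw [hpr, hsum, hins, Finset.sum_insert h0ni, Finset.sum_insert h1ni]
      have c0 : ((e 0 : ℕ) : ℚ)
          = (M : ℚ) * ((e 0 / M : ℕ) : ℚ) + ((e 0 % M : ℕ) : ℚ) := by
        exact_mod_cast (Nat.div_add_mod (e 0) M).symm
      have c1 : ((e 1 : ℕ) : ℚ)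
          = (N : ℚ) * ((e 1 / N : ℕ) : ℚ) + ((e 1 % N : ℕ) : ℚ) := by
        exact_mod_cast (Nat.div_add_mod (e 1) N).symm
      have hγ0 : G.γ ν 0 = vP ν (G.Q 0) := rfl
      have hγ1 : G.γ ν 1 = vP ν (G.Q 1) := rfl
      rw [hγ0, hγ1, c0, c1]
      ring
  -- the finite set F
  refine ⟨((Finset.range M) ×ˢ (Finset.range N)).image
    (fun p => (p.1 : ℚ) * vP ν (G.Q 0) + (p.2 : ℚ) * vP ν (G.Q 1)), ?_, ?_⟩
  · intro q hq
    obtain ⟨⟨r0, r1⟩, hr, rfl⟩ := Finset.mem_image.mp (Finset.mem_coe.mp hq)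
    refine ⟨G.Q 0 ^ r0 * G.Q 1 ^ r1, 1, mul_ne_zero (pow_ne_zero _ (Q_ne_zero hG 0))
      (pow_ne_zero _ (Q_ne_zero hG 1)), by simp, ?_⟩
    rw [vP_one ν, sub_zero, vP_mul ν (pow_ne_zero _ (Q_ne_zero hG 0))
      (pow_ne_zero _ (Q_ne_zero hG 1)), vP_pow ν (Q_ne_zero hG 0),
      vP_pow ν (Q_ne_zero hG 1)]
  · ext q
    constructor
    · rintro ⟨f, g, hf, hg, rfl⟩
      rw [vP_cc ν hdom hg, sub_zero]
      obtain ⟨c, ⟨hadm, hrep⟩, -⟩ := hG.hexpand f hf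
      obtain ⟨-, e0, he0supp, hfe0, -⟩ := hG.hval f hf c hadm hrep
      obtain ⟨h, hh0, hhinv, hdecomp⟩ := key e0
      rw [Set.mem_add]
      refine ⟨((e0 0 % M : ℕ) : ℚ) * vP ν (G.Q 0) + ((e0 1 % N : ℕ) : ℚ) * vP ν (G.Q 1),
        ?_, vP ν h, ?_, ?_⟩
      · refine Finset.mem_coe.mpr (Finset.mem_image.mpr ⟨(e0 0 % M, e0 1 % N), ?_, rfl⟩)
        refine Finset.mem_product.mpr ⟨Finset.mem_range.mpr (Nat.mod_lt _ hM),
          Finset.mem_range.mpr (Nat.mod_lt _ hN)⟩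
      · exact ⟨h, 1, hh0, hhinv, inv1, by simp, by rw [vP_one ν, sub_zero]⟩
      · rw [hfe0, hdecomp]
    · rintro ⟨xx, hx, yy, hy, rfl⟩
      obtain ⟨⟨r0, r1⟩, hr, rfl⟩ := Finset.mem_image.mp (Finset.mem_coe.mp hx)
      obtain ⟨f', g', hf', hinvf', hinvg', hccg', rfl⟩ := hy
      rw [vP_cc ν hdom hccg', sub_zero]
      refine ⟨G.Q 0 ^ r0 * G.Q 1 ^ r1 * f', 1,
        mul_ne_zero (mul_ne_zero (pow_ne_zero _ (Q_ne_zero hG 0))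
          (pow_ne_zero _ (Q_ne_zero hG 1))) hf', by simp, ?_⟩
      rw [vP_one ν, sub_zero,
        vP_mul ν (mul_ne_zero (pow_ne_zero _ (Q_ne_zero hG 0))
          (pow_ne_zero _ (Q_ne_zero hG 1))) hf',
        vP_mul ν (pow_ne_zero _ (Q_ne_zero hG 0)) (pow_ne_zero _ (Q_ne_zero hG 1)),
        vP_pow ν (Q_ne_zero hG 0), vP_pow ν (Q_ne_zero hG 1)]


end DuttaPaper
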